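/- arXiv:2005.04341 — 6 statements merged into one kernel-verified Lean document; each statement's English description precedes it below -/
import Mathlib

section
/- With notation as above (ψ ∈ S a unit vector, dim S = M, global depolarization ρ_err = I/N, 0 < ε < 1): the ratio of the post-selected infidelity to the uncorrected infidelity satisfies (1 − ⟨ψ|ρ'|ψ⟩)/(1 − ⟨ψ|ρ̃|ψ⟩) ≤ (M−1)/(N−1) · (1/(1−ε)), where ρ̃ = (1−ε)|ψ⟩⟨ψ| + ε I/N and ρ' is the projected and renormalized state. -/
open Matrix

/-! The projector `P` onto `S` is idempotent and fixes `ψ`, so `P ρ̃ P` keeps the overlap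
`1 - ε + ε/N` with `ψ` while its trace drops from `1` to `1 - ε + εM/N`. Hence the infidelity
ratio is exactly `(M - 1) / ((N - 1)(1 - ε + εM/N))`, and the trace is at least `1 - ε`. -/

namespace Matrix

variable {ι n R : Type*} [Fintype ι] [Fintype n] [CommSemiring R]

theorem vecMulVec_mulVec_of_comm (u v w : n → R) : vecMulVec u v *ᵥ w = (v ⬝ᵥ w) • u := by
  rw [vecMulVec_mulVec, op_smul_eq_smul]

variable [StarRing R]

def orthoProj (s : ι → n → R) : Matrix n n R := ∑ i, vecMulVec (s i) (star (s i))

section Orthonormal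

variable [DecidableEq ι] {s : ι → n → R} (hs : ∀ i j, star (s i) ⬝ᵥ s j = if i = j then 1 else 0)
include hs

theorem orthoProj_mulVec_apply (j : ι) : orthoProj s *ᵥ s j = s j := by
  simp [orthoProj, sum_mulVec, vecMulVec_mulVec_of_comm, hs]

theorem orthoProj_mulVec_sum (c : ι → R) : orthoProj s *ᵥ ∑ i, c i • s i = ∑ i, c i • s i := by
  simp [mulVec_sum, mulVec_smul, orthoProj_mulVec_apply hs]

theorem orthoProj_mul_self : orthoProj s * orthoProj s = orthoProj s := by
  nth_rw 2 [orthoProj]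
  simp_rw [Finset.mul_sum, mul_vecMulVec, orthoProj_mulVec_apply hs]
  rfl

theorem trace_orthoProj : (orthoProj s).trace = Fintype.card ι := by
  simp_rw [orthoProj, trace_sum, trace_vecMulVec, dotProduct_comm (s _), hs]
  simp

end Orthonormal

section Depolarized

variable [DecidableEq n] {P : Matrix n n R} {ψ : n → R} (hψ : star ψ ⬝ᵥ ψ = 1) (α β : R)
include hψ

theorem depolarized_mulVec :
    (α • vecMulVec ψ (star ψ) + β • 1) *ᵥ ψ = (α + β) • ψ := by
  rw [add_mulVec, smul_mulVec, smul_mulVec, vecMulVec_mulVec_of_comm, hψ, one_smul, one_mulVec,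
    add_smul]

theorem dotProduct_compress_depolarized_mulVec (hPψ : P *ᵥ ψ = ψ) :
    star ψ ⬝ᵥ (P * (α • vecMulVec ψ (star ψ) + β • 1) * P) *ᵥ ψ = α + β := by
  rw [← mulVec_mulVec, ← mulVec_mulVec, hPψ, depolarized_mulVec hψ, mulVec_smul, hPψ,
    dotProduct_smul, hψ, smul_eq_mul, mul_one]

theorem trace_compress_depolarized (hP : P * P = P) (hPψ : P *ᵥ ψ = ψ) :
    (P * (α • vecMulVec ψ (star ψ) + β • 1) * P).trace = α + β * P.trace := by
  rw [trace_mul_cycle, hP, mul_add, Matrix.mul_smul, Matrix.mul_smul, mul_one, mul_vecMulVec, hPψ,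
    trace_add, trace_smul, trace_smul, trace_vecMulVec, dotProduct_comm, hψ, smul_eq_mul,
    smul_eq_mul, mul_one]

end Depolarized

end Matrix

theorem depolarized_infidelity_ratio_le {M N ε : ℝ} (hM : 1 ≤ M) (hN : 1 < N) (hε0 : 0 < ε)
    (hε1 : ε < 1) :
    (1 - (1 - ε + ε / N) / (1 - ε + ε / N * M)) / (1 - (1 - ε + ε / N))
      ≤ (M - 1) / (N - 1) * (1 / (1 - ε)) := by
  have htrace : 1 - ε ≤ 1 - ε + ε / N * M := by
    have : 0 ≤ ε / N * M := by positivity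
    linarith
  have hratio : (1 - (1 - ε + ε / N) / (1 - ε + ε / N * M)) / (1 - (1 - ε + ε / N))
      = (M - 1) / ((N - 1) * (1 - ε + ε / N * M)) := by
    have hN0 : N ≠ 0 := by positivity
    have hN1 : N - 1 ≠ 0 := by linarith
    have hεN : ε / N ≠ 0 := by positivity
    have hgap : 1 - ε + ε / N * M - (1 - ε + ε / N) = ε / N * (M - 1) := by ring
    have hinfid : 1 - (1 - ε + ε / N) = ε / N * (N - 1) := by field_simp; ring
    rw [one_sub_div (by linarith), hgap, hinfid]
    field_simp
  rw [hratio, div_mul_div_comm, mul_one]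
  exact div_le_div_of_nonneg_left (by linarith) (by nlinarith) (by nlinarith)

theorem stmt_4_general {N M : ℕ} (hM : 1 ≤ M) (hN : 2 ≤ N)
    (s : Fin M → (Fin N → ℂ))
    (hon : ∀ i j, star (s i) ⬝ᵥ s j = if i = j then 1 else 0)
    (ψ : Fin N → ℂ) (hψ : star ψ ⬝ᵥ ψ = 1)
    (c : Fin M → ℂ) (hψS : ψ = ∑ i, c i • s i)
    (ε : ℝ) (hε0 : 0 < ε) (hε1 : ε < 1)
    (MS ρt A ρ' : Matrix (Fin N) (Fin N) ℂ)
    (hMS : MS = ∑ i, vecMulVec (s i) (star (s i)))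
    (hρt : ρt = (1 - (ε : ℂ)) • vecMulVec ψ (star ψ)
        + ((ε : ℂ) / N) • (1 : Matrix (Fin N) (Fin N) ℂ))
    (hA : A = MS * ρt * MS)
    (hρ' : ρ' = (A.trace)⁻¹ • A) :
    (1 - star ψ ⬝ᵥ ρ' *ᵥ ψ).re / (1 - star ψ ⬝ᵥ ρt *ᵥ ψ).re
      ≤ ((M : ℝ) - 1) / ((N : ℝ) - 1) * (1 / (1 - ε)) := by
  have hPψ : orthoProj s *ᵥ ψ = ψ := by rw [hψS]; exact orthoProj_mulVec_sum hon c
  have hfid : star ψ ⬝ᵥ ρt *ᵥ ψ = ((1 - ε + ε / N : ℝ) : ℂ) := by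
    rw [hρt, depolarized_mulVec hψ, dotProduct_smul, hψ, smul_eq_mul, mul_one]
    push_cast; ring
  have hfid' : star ψ ⬝ᵥ ρ' *ᵥ ψ
      = (((1 - ε + ε / N) / (1 - ε + ε / N * M) : ℝ) : ℂ) := by
    rw [hρ', hA, hMS, hρt, smul_mulVec, dotProduct_smul, ← orthoProj,
      dotProduct_compress_depolarized_mulVec hψ _ _ hPψ,
      trace_compress_depolarized hψ _ _ (orthoProj_mul_self hon) hPψ, trace_orthoProj hon,
      Fintype.card_fin, smul_eq_mul]
    push_cast; ring
  rw [hfid, hfid', ← Complex.ofReal_one, ← Complex.ofReal_sub, ← Complex.ofReal_sub,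
    Complex.ofReal_re, Complex.ofReal_re]
  exact depolarized_infidelity_ratio_le (by exact_mod_cast hM) (by exact_mod_cast hN) hε0 hε1

/-- The ratio of the post-selected infidelity to the uncorrected infidelity is at most
(M-1)/(N-1) · 1/(1-ε) under global depolarization noise. -/
theorem stmt_4 {N M : ℕ} (hM : 1 ≤ M) (hMN : M ≤ N) (hN : 2 ≤ N)
    (s : Fin M → (Fin N → ℂ))
    (hon : ∀ i j, star (s i) ⬝ᵥ s j = if i = j then 1 else 0)
    (ψ : Fin N → ℂ) (hψ : star ψ ⬝ᵥ ψ = 1)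
    (c : Fin M → ℂ) (hψS : ψ = ∑ i, c i • s i)
    (ε : ℝ) (hε0 : 0 < ε) (hε1 : ε < 1)
    (MS ρt A ρ' : Matrix (Fin N) (Fin N) ℂ)
    (hMS : MS = ∑ i, vecMulVec (s i) (star (s i)))
    (hρt : ρt = (1 - (ε : ℂ)) • vecMulVec ψ (star ψ)
        + ((ε : ℂ) / N) • (1 : Matrix (Fin N) (Fin N) ℂ))
    (hA : A = MS * ρt * MS)
    (hρ' : ρ' = (A.trace)⁻¹ • A) :
    (1 - star ψ ⬝ᵥ ρ' *ᵥ ψ).re / (1 - star ψ ⬝ᵥ ρt *ᵥ ψ).re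
      ≤ ((M : ℝ) - 1) / ((N : ℝ) - 1) * (1 / (1 - ε)) :=
  stmt_4_general hM hN s hon ψ hψ c hψS ε hε0 hε1 MS ρt A ρ' hMS hρt hA hρ'
end

section
/- In the setting of the previous statement, the infidelity of the post-selected state satisfies 1 − ⟨ψ|ρ'|ψ⟩ ≤ (ε/(1−ε)) · Tr Λ. In particular, if Tr Λ = 0 then ρ' = |ψ⟩⟨ψ|. -/
open Matrix ComplexOrder

/-! Writing `t = Tr Λ` and `q = ⟨ψ|Λ|ψ⟩`, both real and nonnegative, the fidelity of the
post-selected state is `((1 - ε) + ε q) / ((1 - ε) + ε t)`, so the infidelity is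
`ε (t - q) / ((1 - ε) + ε t) ≤ ε t / (1 - ε)`. A positive semidefinite matrix of trace zero
vanishes, which gives the second claim. -/

namespace Matrix

theorem dotProduct_vecMulVec_mulVec {n α : Type*} [Fintype n] [CommSemiring α]
    (u v w x : n → α) : u ⬝ᵥ vecMulVec v w *ᵥ x = (u ⬝ᵥ v) * (w ⬝ᵥ x) := by
  rw [dotProduct_mulVec, vecMul_vecMulVec, smul_dotProduct, smul_eq_mul]

theorem dotProduct_smul_mixture_mulVec {n α : Type*} [Fintype n] [CommSemiring α] [Star α]
    {ψ : n → α} (hψ : star ψ ⬝ᵥ ψ = 1) (c a b : α) (Λ : Matrix n n α) :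
    star ψ ⬝ᵥ (c • (a • vecMulVec ψ (star ψ) + b • Λ)) *ᵥ ψ =
      c * (a + b * (star ψ ⬝ᵥ Λ *ᵥ ψ)) := by
  simp only [smul_mulVec, add_mulVec, dotProduct_smul, dotProduct_add,
    dotProduct_vecMulVec_mulVec, hψ, smul_eq_mul, mul_one]

end Matrix

theorem one_sub_mixture_div_le {ε q t : ℝ} (hε0 : 0 ≤ ε) (hε1 : ε < 1) (hq : 0 ≤ q)
    (ht : 0 ≤ t) :
    1 - ((1 - ε) + ε * q) / ((1 - ε) + ε * t) ≤ ε / (1 - ε) * t := by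
  have h1ε : 0 < 1 - ε := by linarith
  have hεt : 0 ≤ ε * t := mul_nonneg hε0 ht
  calc 1 - ((1 - ε) + ε * q) / ((1 - ε) + ε * t)
      ≤ 1 - (1 - ε) / ((1 - ε) + ε * t) := by
        gcongr
        linarith [mul_nonneg hε0 hq]
    _ = ε * t / ((1 - ε) + ε * t) := by field_simp; ring
    _ ≤ ε * t / (1 - ε) := by gcongr; linarith
    _ = ε / (1 - ε) * t := by ring

theorem stmt_9_general {N : ℕ} (ψ : Fin N → ℂ) (hψ : star ψ ⬝ᵥ ψ = 1)
    (ε : ℝ) (hε0 : 0 ≤ ε) (hε1 : ε < 1)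
    (Λ : Matrix (Fin N) (Fin N) ℂ) (hΛ : Λ.PosSemidef)
    (ρ' : Matrix (Fin N) (Fin N) ℂ)
    (hρ' : ρ' = ((1 - (ε : ℂ)) + (ε : ℂ) * Λ.trace)⁻¹ •
        ((1 - (ε : ℂ)) • vecMulVec ψ (star ψ) + (ε : ℂ) • Λ)) :
    (1 - star ψ ⬝ᵥ ρ' *ᵥ ψ).re ≤ (ε / (1 - ε)) * (Λ.trace).re ∧
      (Λ.trace = 0 → ρ' = vecMulVec ψ (star ψ)) := by
  have ht := hΛ.trace_nonneg
  have hq := hΛ.dotProduct_mulVec_nonneg ψ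
  have hfid : star ψ ⬝ᵥ ρ' *ᵥ ψ =
      (((1 - ε) + ε * (star ψ ⬝ᵥ Λ *ᵥ ψ).re) / ((1 - ε) + ε * Λ.trace.re) : ℝ) := by
    rw [hρ', dotProduct_smul_mixture_mulVec hψ, Complex.eq_re_of_ofReal_le ht,
      Complex.eq_re_of_ofReal_le hq]
    simp only [Complex.ofReal_re]
    push_cast
    rw [div_eq_inv_mul]
  refine ⟨?_, fun htr ↦ ?_⟩
  · rw [hfid, Complex.sub_re, Complex.one_re, Complex.ofReal_re]
    exact one_sub_mixture_div_le hε0 hε1 (Complex.nonneg_iff.mp hq).1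
      (Complex.nonneg_iff.mp ht).1
  · have h1ε : (1 - ε : ℂ) ≠ 0 := by exact_mod_cast (sub_pos.mpr hε1).ne'
    rw [hρ', htr, hΛ.trace_eq_zero_iff.mp htr, smul_zero, add_zero, mul_zero, add_zero,
      smul_smul, inv_mul_cancel₀ h1ε, one_smul]

/-- The infidelity of the post-selected state is at most (ε/(1-ε))·Tr Λ; in
particular, if Tr Λ = 0 then ρ' = |ψ⟩⟨ψ| exactly. -/
theorem stmt_9 {N : ℕ} (ψ : Fin N → ℂ) (hψ : star ψ ⬝ᵥ ψ = 1)
    (ε : ℝ) (hε0 : 0 ≤ ε) (hε1 : ε < 1)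
    (Λ : Matrix (Fin N) (Fin N) ℂ) (hΛ : Λ.PosSemidef) (hΛtr : (Λ.trace).re ≤ 1)
    (ρ' : Matrix (Fin N) (Fin N) ℂ)
    (hρ' : ρ' = ((1 - (ε : ℂ)) + (ε : ℂ) * Λ.trace)⁻¹ •
        ((1 - (ε : ℂ)) • vecMulVec ψ (star ψ) + (ε : ℂ) • Λ)) :
    (1 - star ψ ⬝ᵥ ρ' *ᵥ ψ).re ≤ (ε / (1 - ε)) * (Λ.trace).re ∧
      (Λ.trace = 0 → ρ' = vecMulVec ψ (star ψ)) :=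
  stmt_9_general ψ hψ ε hε0 hε1 Λ hΛ ρ' hρ'
end

section
/- Let U be a unitary on a bipartite space H_A ⊗ H_B (both finite-dimensional), let e₀ ∈ H_B be a unit vector, and suppose that for two linearly independent unit vectors ψ₁, ψ₂ ∈ H_A and also for the unit vector proportional to ψ₁ + ψ₂, U(ψ ⊗ e₀) = ψ ⊗ φ_ψ holds for some unit vector φ_ψ ∈ H_B (depending on ψ). Then φ_{ψ₁} = φ_{ψ₂} up to a phase; i.e., there exists a unit vector φ ∈ H_B and phases c₁, c₂ with |cᵢ|=1 such that U(ψᵢ ⊗ e₀) = cᵢ (ψᵢ ⊗ φ) for i = 1, 2. -/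
/-!
Since `U` is linear, `U (ψ₃ ⊗ e₀) = c • (ψ₁ ⊗ φ₁ + ψ₂ ⊗ φ₂)`, while by hypothesis it is
`c • ((ψ₁ + ψ₂) ⊗ φ₃)`. Comparing the coefficients of `ψ₁` and `ψ₂` in each `H_B`-coordinate,
which is possible because `ψ₁, ψ₂` are linearly independent, gives `φ₁ = φ₃ = φ₂`.
-/

open Matrix ComplexOrder

/-- The tensor product of two vectors. -/
def tensorVec {a b : ℕ} (ψ : Fin a → ℂ) (φ : Fin b → ℂ) : Fin a × Fin b → ℂ :=
  fun p => ψ p.1 * φ p.2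

section TensorVec

variable {a b : ℕ}

theorem tensorVec_add_left (ψ ψ' : Fin a → ℂ) (φ : Fin b → ℂ) :
    tensorVec (ψ + ψ') φ = tensorVec ψ φ + tensorVec ψ' φ := by
  funext p
  simp only [tensorVec, Pi.add_apply, add_mul]

theorem tensorVec_smul_left (c : ℂ) (ψ : Fin a → ℂ) (φ : Fin b → ℂ) :
    tensorVec (c • ψ) φ = c • tensorVec ψ φ := by
  funext p
  simp only [tensorVec, Pi.smul_apply, smul_eq_mul, mul_assoc]

theorem eq_of_tensorVec_add_tensorVec_eq_tensorVec {ψ₁ ψ₂ : Fin a → ℂ}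
    (hli : LinearIndependent ℂ ![ψ₁, ψ₂]) {φ₁ φ₂ φ : Fin b → ℂ}
    (h : tensorVec ψ₁ φ₁ + tensorVec ψ₂ φ₂ = tensorVec (ψ₁ + ψ₂) φ) :
    φ₁ = φ ∧ φ₂ = φ := by
  have hcoeff : ∀ j, (φ₁ j - φ j) • ψ₁ + (φ₂ j - φ j) • ψ₂ = 0 := fun j ↦ by
    funext i
    have hij := congrFun h (i, j)
    simp only [tensorVec, Pi.add_apply] at hij
    simp only [Pi.add_apply, Pi.smul_apply, smul_eq_mul, Pi.zero_apply]
    linear_combination hij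
  have hzero := fun j ↦ LinearIndependent.pair_iff.mp hli _ _ (hcoeff j)
  exact ⟨funext fun j ↦ sub_eq_zero.mp (hzero j).1, funext fun j ↦ sub_eq_zero.mp (hzero j).2⟩

end TensorVec

theorem stmt_10_general {a b : ℕ}
    (U : Matrix (Fin a × Fin b) (Fin a × Fin b) ℂ)
    (e₀ : Fin b → ℂ)
    (ψ₁ ψ₂ ψ₃ : Fin a → ℂ)
    (hli : LinearIndependent ℂ ![ψ₁, ψ₂])
    (c : ℂ) (hc : c ≠ 0) (hψ₃def : ψ₃ = c • (ψ₁ + ψ₂))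
    (φ₁ φ₂ φ₃ : Fin b → ℂ)
    (hφ₁ : star φ₁ ⬝ᵥ φ₁ = 1)
    (h1 : U *ᵥ tensorVec ψ₁ e₀ = tensorVec ψ₁ φ₁)
    (h2 : U *ᵥ tensorVec ψ₂ e₀ = tensorVec ψ₂ φ₂)
    (h3 : U *ᵥ tensorVec ψ₃ e₀ = tensorVec ψ₃ φ₃) :
    ∃ (φ : Fin b → ℂ) (c₁ c₂ : ℂ), star φ ⬝ᵥ φ = 1 ∧ ‖c₁‖ = 1 ∧ ‖c₂‖ = 1 ∧
      U *ᵥ tensorVec ψ₁ e₀ = c₁ • tensorVec ψ₁ φ ∧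
      U *ᵥ tensorVec ψ₂ e₀ = c₂ • tensorVec ψ₂ φ := by
  have hsum : c • (tensorVec ψ₁ φ₁ + tensorVec ψ₂ φ₂) = c • tensorVec (ψ₁ + ψ₂) φ₃ :=
    calc c • (tensorVec ψ₁ φ₁ + tensorVec ψ₂ φ₂) = U *ᵥ tensorVec ψ₃ e₀ := by
          rw [hψ₃def, tensorVec_smul_left, tensorVec_add_left, mulVec_smul, mulVec_add, h1, h2]
      _ = c • tensorVec (ψ₁ + ψ₂) φ₃ := by rw [h3, hψ₃def, tensorVec_smul_left]
  obtain ⟨hφ₁₃, hφ₂₃⟩ :=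
    eq_of_tensorVec_add_tensorVec_eq_tensorVec hli (smul_right_injective _ hc hsum)
  refine ⟨φ₁, 1, 1, hφ₁, norm_one, norm_one, by rw [h1, one_smul], ?_⟩
  rw [h2, one_smul, hφ₁₃, hφ₂₃]

/-- No-cloning-style rigidity: if a unitary sends ψᵢ ⊗ e₀ to ψᵢ ⊗ φᵢ for two linearly
independent unit vectors and also for the normalized superposition, then the
environment states coincide up to a phase. -/
theorem stmt_10 {a b : ℕ}
    (U : Matrix (Fin a × Fin b) (Fin a × Fin b) ℂ)
    (hU : U ∈ Matrix.unitaryGroup (Fin a × Fin b) ℂ)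
    (e₀ : Fin b → ℂ) (he₀ : star e₀ ⬝ᵥ e₀ = 1)
    (ψ₁ ψ₂ ψ₃ : Fin a → ℂ)
    (hψ₁ : star ψ₁ ⬝ᵥ ψ₁ = 1) (hψ₂ : star ψ₂ ⬝ᵥ ψ₂ = 1) (hψ₃ : star ψ₃ ⬝ᵥ ψ₃ = 1)
    (hli : LinearIndependent ℂ ![ψ₁, ψ₂])
    (c : ℂ) (hc : c ≠ 0) (hψ₃def : ψ₃ = c • (ψ₁ + ψ₂))
    (φ₁ φ₂ φ₃ : Fin b → ℂ)
    (hφ₁ : star φ₁ ⬝ᵥ φ₁ = 1) (hφ₂ : star φ₂ ⬝ᵥ φ₂ = 1) (hφ₃ : star φ₃ ⬝ᵥ φ₃ = 1)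
    (h1 : U *ᵥ tensorVec ψ₁ e₀ = tensorVec ψ₁ φ₁)
    (h2 : U *ᵥ tensorVec ψ₂ e₀ = tensorVec ψ₂ φ₂)
    (h3 : U *ᵥ tensorVec ψ₃ e₀ = tensorVec ψ₃ φ₃) :
    ∃ (φ : Fin b → ℂ) (c₁ c₂ : ℂ), star φ ⬝ᵥ φ = 1 ∧ ‖c₁‖ = 1 ∧ ‖c₂‖ = 1 ∧
      U *ᵥ tensorVec ψ₁ e₀ = c₁ • tensorVec ψ₁ φ ∧
      U *ᵥ tensorVec ψ₂ e₀ = c₂ • tensorVec ψ₂ φ :=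
  stmt_10_general U e₀ ψ₁ ψ₂ ψ₃ hli c hc hψ₃def φ₁ φ₂ φ₃ hφ₁ h1 h2 h3
end

section
/- Let U be a unitary on H_A ⊗ H_B and e₀ ∈ H_B a unit vector. Suppose U(ψ_a ⊗ e₀ ψ_a† ⊗ e₀†)U† traced over H_B equals |ψ_a⟩⟨ψ_a| for every unit vector ψ_a in a subspace S ⊆ H_A, i.e., Tr_B[U(|ψ_a⟩⟨ψ_a| ⊗ |e₀⟩⟨e₀|)U†] = |ψ_a⟩⟨ψ_a|. Then there is a unit vector φ ∈ H_B such that U(v ⊗ e₀) = v ⊗ φ for all v ∈ S (after adjusting U by a global phase on S ⊗ e₀). -/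
/-!
For a unit vector `ψ ∈ S`, reshape `Ψ = U (ψ ⊗ e₀)` into an `a × b` matrix `M`. The hypothesis
says `M Mᴴ = ψ ψᴴ`, which forces `M = ψ φᵀ`, i.e. `Ψ = ψ ⊗ φ`, and unitarity makes `φ` a unit
vector. Unitarity also gives `⟨v, w⟩ ⟨φ_v, φ_w⟩ = ⟨v, w⟩`, so the environment states of two
non-orthogonal vectors of `S` coincide; orthogonal ones are linked through their sum.
-/

open Matrix ComplexOrder

/-- Partial trace over the second tensor factor. -/
noncomputable def ptraceB {a b : ℕ} (M : Matrix (Fin a × Fin b) (Fin a × Fin b) ℂ) :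
    Matrix (Fin a) (Fin a) ℂ :=
  fun i j => ∑ k : Fin b, M (i, k) (j, k)

section RCLike

variable {m n 𝕜 : Type*} [Fintype m] [Fintype n] [RCLike 𝕜]

theorem star_mulVec_dotProduct_mulVec_of_mem_unitaryGroup [DecidableEq n] {U : Matrix n n 𝕜}
    (hU : U ∈ unitaryGroup n 𝕜) (x y : n → 𝕜) : star (U *ᵥ x) ⬝ᵥ (U *ᵥ y) = star x ⬝ᵥ y := by
  rw [star_mulVec, dotProduct_mulVec, vecMul_vecMul, ← star_eq_conjTranspose,
    (mem_unitaryGroup_iff').1 hU, vecMul_one]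

theorem eq_of_star_dotProduct_eq_one {f g : n → 𝕜} (hf : star f ⬝ᵥ f = 1)
    (hg : star g ⬝ᵥ g = 1) (hfg : star f ⬝ᵥ g = 1) : f = g := by
  have hgf : star g ⬝ᵥ f = 1 := by rw [star_dotProduct, hfg, star_one]
  rw [← sub_eq_zero, ← dotProduct_star_self_eq_zero]
  simp only [star_sub, sub_dotProduct, dotProduct_sub, hf, hg, hfg, hgf]
  ring

theorem exists_smul_star_dotProduct_eq_one {v : n → 𝕜} (hv : v ≠ 0) :
    ∃ c : 𝕜, c ≠ 0 ∧ star (c • v) ⬝ᵥ (c • v) = 1 := by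
  obtain ⟨x, hx, hxv⟩ := RCLike.pos_iff_exists_ofReal.1 (dotProduct_star_self_pos_iff.2 hv)
  refine ⟨((√x)⁻¹ : ℝ), by simpa using (Real.sqrt_pos.2 hx).ne', ?_⟩
  rw [star_smul, smul_dotProduct, dotProduct_smul, ← hxv, smul_eq_mul, smul_eq_mul,
    RCLike.star_def, RCLike.conj_ofReal]
  norm_cast
  field_simp
  exact (Real.sq_sqrt hx.le).symm

/-- With `P = ψ ψᴴ` the projection onto `ψ`, `(M - P M)(M - P M)ᴴ = (1 - P) P (1 - P) = 0`. -/
theorem eq_vecMulVec_of_mul_conjTranspose_eq {M : Matrix m n 𝕜} {ψ : m → 𝕜}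
    (hψ : star ψ ⬝ᵥ ψ = 1) (hM : M * Mᴴ = vecMulVec ψ (star ψ)) :
    M = vecMulVec ψ (star ψ ᵥ* M) := by
  set P := vecMulVec ψ (star ψ) with hPdef
  have hP : P * P = P := by rw [vecMulVec_mul_vecMulVec, hψ, one_smul]
  have hPH : Pᴴ = P := by rw [conjTranspose_vecMulVec, star_star]
  rw [← vecMulVec_mul, ← hPdef, ← sub_eq_zero, ← self_mul_conjTranspose_eq_zero]
  calc (M - P * M) * (M - P * M)ᴴ
      = M * Mᴴ - P * (M * Mᴴ) - M * Mᴴ * P + P * (M * Mᴴ) * P := by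
        rw [conjTranspose_sub, conjTranspose_mul, hPH]
        simp only [Matrix.sub_mul, Matrix.mul_sub, Matrix.mul_assoc]
        abel
    _ = 0 := by rw [hM, hP, hP, sub_self, zero_sub, neg_add_cancel]

end RCLike

section Tensor

variable {a b : ℕ}

theorem tensorVec_zero_left (φ : Fin b → ℂ) : tensorVec (0 : Fin a → ℂ) φ = 0 := by
  funext p
  simp [tensorVec]

theorem star_tensorVec_dotProduct_tensorVec (u v : Fin a → ℂ) (f g : Fin b → ℂ) :
    star (tensorVec u f) ⬝ᵥ tensorVec v g = (star u ⬝ᵥ v) * (star f ⬝ᵥ g) := by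
  simp only [dotProduct, tensorVec, Pi.star_apply, star_mul', Fintype.sum_prod_type,
    Finset.sum_mul_sum]
  refine Finset.sum_congr rfl fun i _ => Finset.sum_congr rfl fun k _ => ?_
  ring

theorem ptraceB_vecMulVec_star (Ψ : Fin a × Fin b → ℂ) :
    ptraceB (vecMulVec Ψ (star Ψ)) = of (Function.curry Ψ) * (of (Function.curry Ψ))ᴴ := by
  ext i j
  simp [ptraceB, mul_apply, vecMulVec_apply]

theorem exists_eq_tensorVec_of_ptraceB_eq {Ψ : Fin a × Fin b → ℂ} {ψ : Fin a → ℂ}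
    (hψ : star ψ ⬝ᵥ ψ = 1) (h : ptraceB (vecMulVec Ψ (star Ψ)) = vecMulVec ψ (star ψ)) :
    ∃ φ, Ψ = tensorVec ψ φ := by
  rw [ptraceB_vecMulVec_star] at h
  exact ⟨_, funext fun p => congr_fun₂ (eq_vecMulVec_of_mul_conjTranspose_eq hψ h) p.1 p.2⟩

end Tensor

section Unitary

variable {a b : ℕ} {U : Matrix (Fin a × Fin b) (Fin a × Fin b) ℂ} {e₀ : Fin b → ℂ}

theorem exists_mulVec_tensorVec_eq (hU : U ∈ unitaryGroup (Fin a × Fin b) ℂ)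
    (he₀ : star e₀ ⬝ᵥ e₀ = 1) {ψ : Fin a → ℂ} (hψ : star ψ ⬝ᵥ ψ = 1)
    (h : ptraceB (U * vecMulVec (tensorVec ψ e₀) (star (tensorVec ψ e₀)) * Uᴴ)
      = vecMulVec ψ (star ψ)) :
    ∃ φ, star φ ⬝ᵥ φ = 1 ∧ U *ᵥ tensorVec ψ e₀ = tensorVec ψ φ := by
  rw [mul_vecMulVec, vecMulVec_mul, ← star_mulVec] at h
  obtain ⟨φ, hφ⟩ := exists_eq_tensorVec_of_ptraceB_eq hψ h
  refine ⟨φ, ?_, hφ⟩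
  have hnorm := star_mulVec_dotProduct_mulVec_of_mem_unitaryGroup hU
    (tensorVec ψ e₀) (tensorVec ψ e₀)
  rwa [hφ, star_tensorVec_dotProduct_tensorVec, star_tensorVec_dotProduct_tensorVec, hψ, he₀,
    one_mul, one_mul] at hnorm

theorem exists_mulVec_tensorVec_eq_of_mem (hU : U ∈ unitaryGroup (Fin a × Fin b) ℂ)
    (he₀ : star e₀ ⬝ᵥ e₀ = 1) {S : Submodule ℂ (Fin a → ℂ)}
    (h : ∀ ψ ∈ S, star ψ ⬝ᵥ ψ = 1 →
      ptraceB (U * vecMulVec (tensorVec ψ e₀) (star (tensorVec ψ e₀)) * Uᴴ)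
        = vecMulVec ψ (star ψ))
    {v : Fin a → ℂ} (hv : v ∈ S) :
    ∃ φ, star φ ⬝ᵥ φ = 1 ∧ U *ᵥ tensorVec v e₀ = tensorVec v φ := by
  rcases eq_or_ne v 0 with rfl | hv0
  · exact ⟨e₀, he₀, by simp only [tensorVec_zero_left, mulVec_zero]⟩
  obtain ⟨c, hc, hcv⟩ := exists_smul_star_dotProduct_eq_one hv0
  obtain ⟨φ, hφ, hUφ⟩ := exists_mulVec_tensorVec_eq hU he₀ hcv (h _ (S.smul_mem c hv) hcv)
  refine ⟨φ, hφ, smul_right_injective _ hc ?_⟩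
  simpa only [tensorVec_smul_left, mulVec_smul] using hUφ

theorem eq_of_mulVec_tensorVec_eq (hU : U ∈ unitaryGroup (Fin a × Fin b) ℂ)
    (he₀ : star e₀ ⬝ᵥ e₀ = 1) {v w : Fin a → ℂ} {φ χ : Fin b → ℂ}
    (hφ : star φ ⬝ᵥ φ = 1) (hχ : star χ ⬝ᵥ χ = 1)
    (hvφ : U *ᵥ tensorVec v e₀ = tensorVec v φ) (hwχ : U *ᵥ tensorVec w e₀ = tensorVec w χ)
    (hvw : star v ⬝ᵥ w ≠ 0) : φ = χ := by
  have hdot := star_mulVec_dotProduct_mulVec_of_mem_unitaryGroup hU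
    (tensorVec v e₀) (tensorVec w e₀)
  rw [hvφ, hwχ, star_tensorVec_dotProduct_tensorVec, star_tensorVec_dotProduct_tensorVec, he₀]
    at hdot
  exact eq_of_star_dotProduct_eq_one hφ hχ (mul_left_cancel₀ hvw hdot)

theorem eq_of_mulVec_tensorVec_eq_of_ne_zero (hU : U ∈ unitaryGroup (Fin a × Fin b) ℂ)
    (he₀ : star e₀ ⬝ᵥ e₀ = 1) {v w : Fin a → ℂ} (hv : v ≠ 0) (hw : w ≠ 0)
    {φ χ ξ : Fin b → ℂ} (hφ : star φ ⬝ᵥ φ = 1) (hχ : star χ ⬝ᵥ χ = 1) (hξ : star ξ ⬝ᵥ ξ = 1)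
    (hvφ : U *ᵥ tensorVec v e₀ = tensorVec v φ) (hwχ : U *ᵥ tensorVec w e₀ = tensorVec w χ)
    (hvwξ : U *ᵥ tensorVec (v + w) e₀ = tensorVec (v + w) ξ) : φ = χ := by
  by_cases hvw : star v ⬝ᵥ w = 0
  · have hv_vw : star v ⬝ᵥ (v + w) ≠ 0 := by
      rwa [dotProduct_add, hvw, add_zero, Ne, dotProduct_star_self_eq_zero]
    have hvw_w : star (v + w) ⬝ᵥ w ≠ 0 := by
      rwa [star_add, add_dotProduct, hvw, zero_add, Ne, dotProduct_star_self_eq_zero]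
    exact (eq_of_mulVec_tensorVec_eq hU he₀ hφ hξ hvφ hvwξ hv_vw).trans
      (eq_of_mulVec_tensorVec_eq hU he₀ hξ hχ hvwξ hwχ hvw_w)
  · exact eq_of_mulVec_tensorVec_eq hU he₀ hφ hχ hvφ hwχ hvw

end Unitary

/-- If tracing out the environment of U(|ψ⟩⟨ψ| ⊗ |e₀⟩⟨e₀|)U† returns |ψ⟩⟨ψ| for every
unit vector ψ in a subspace S, then (after absorbing a global phase) there is a single
unit environment state φ with U(v ⊗ e₀) = v ⊗ φ for all v ∈ S. -/
theorem stmt_11 {a b : ℕ}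
    (U : Matrix (Fin a × Fin b) (Fin a × Fin b) ℂ)
    (hU : U ∈ Matrix.unitaryGroup (Fin a × Fin b) ℂ)
    (e₀ : Fin b → ℂ) (he₀ : star e₀ ⬝ᵥ e₀ = 1)
    (S : Submodule ℂ (Fin a → ℂ))
    (h : ∀ ψ ∈ S, star ψ ⬝ᵥ ψ = 1 →
      ptraceB (U * vecMulVec (tensorVec ψ e₀) (star (tensorVec ψ e₀)) * Uᴴ)
        = vecMulVec ψ (star ψ)) :
    ∃ φ : Fin b → ℂ, star φ ⬝ᵥ φ = 1 ∧
      ∀ v ∈ S, U *ᵥ tensorVec v e₀ = tensorVec v φ := by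
  have hprod {v} (hv : v ∈ S) := exists_mulVec_tensorVec_eq_of_mem hU he₀ h hv
  by_cases hS : ∃ v₀ ∈ S, v₀ ≠ 0
  · obtain ⟨v₀, hv₀S, hv₀⟩ := hS
    obtain ⟨φ, hφ, hv₀φ⟩ := hprod hv₀S
    refine ⟨φ, hφ, fun v hv => ?_⟩
    rcases eq_or_ne v 0 with rfl | hv0
    · simp only [tensorVec_zero_left, mulVec_zero]
    obtain ⟨χ, hχ, hvχ⟩ := hprod hv
    obtain ⟨ξ, hξ, hv₀vξ⟩ := hprod (S.add_mem hv₀S hv)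
    rwa [eq_of_mulVec_tensorVec_eq_of_ne_zero hU he₀ hv₀ hv0 hφ hχ hξ hv₀φ hvχ hv₀vξ]
  · push Not at hS
    refine ⟨e₀, he₀, fun v hv => ?_⟩
    simp only [hS v hv, tensorVec_zero_left, mulVec_zero]
end

section
/- (Theorem 1 of the paper, channel form.) Let S be a subspace of the finite-dimensional Hilbert space H, and let Ê(ρ) = Σ_m E_m ρ E_m† be a quantum operation with Σ_m E_m† E_m ≤ I. Suppose Ê(|ψ⟩⟨ψ|) = |ψ⟩⟨ψ| for every unit vector ψ ∈ S. Then Ê(Λ) = Λ for every positive semidefinite matrix Λ whose support is contained in S. -/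
/-!
Write `Λ = ∑ₖ λₖ uₖ uₖ†` with an orthonormal eigenbasis `uₖ`. When `λₖ ≠ 0`, the unit vector
`uₖ = λₖ⁻¹ Λ uₖ` lies in `S`, so the operation fixes `uₖ uₖ†`; the terms with `λₖ = 0` vanish.
Linearity of `ρ ↦ ∑ₘ Eₘ ρ Eₘ†` then gives `Ê(Λ) = Λ`.
-/

open Matrix ComplexOrder

namespace Matrix

def krausMap {n R ι : Type*} [Fintype n] [CommSemiring R] [StarRing R] [Fintype ι]
    (E : ι → Matrix n n R) : Matrix n n R →ₗ[R] Matrix n n R where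
  toFun X := ∑ m, E m * X * (E m)ᴴ
  map_add' X Y := by simp only [mul_add, add_mul, Finset.sum_add_distrib]
  map_smul' c X := by simp only [mul_smul_comm, smul_mul_assoc, Finset.smul_sum, RingHom.id_apply]

variable {𝕜 n : Type*} [RCLike 𝕜] [Fintype n] {A : Matrix n n 𝕜}

theorem IsHermitian.eq_sum_eigenvalues_smul_vecMulVec [DecidableEq n] (hA : A.IsHermitian) :
    A = ∑ k, (hA.eigenvalues k : 𝕜) •
      vecMulVec ⇑(hA.eigenvectorBasis k) (star ⇑(hA.eigenvectorBasis k)) := by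
  conv_lhs => rw [hA.spectral_theorem]
  ext i j
  simp only [diagonal, Function.comp_apply, Unitary.conjStarAlgAut_apply, mul_apply,
    eigenvectorUnitary_apply, of_apply, mul_ite, mul_zero, Finset.sum_ite_eq', Finset.mem_univ,
    ↓reduceIte, star_apply, RCLike.star_def, sum_apply, smul_apply, vecMulVec_apply,
    Pi.star_apply, smul_eq_mul]
  exact Finset.sum_congr rfl fun k _ => by ring

theorem IsHermitian.star_eigenvectorBasis_dotProduct_self [DecidableEq n] (hA : A.IsHermitian)
    (k : n) :
    star ⇑(hA.eigenvectorBasis k) ⬝ᵥ ⇑(hA.eigenvectorBasis k) = 1 := by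
  rw [dotProduct_comm, ← EuclideanSpace.inner_eq_star_dotProduct, inner_self_eq_norm_sq_to_K,
    hA.eigenvectorBasis.orthonormal.1 k]
  simp

theorem IsHermitian.linearMap_apply_eq_self_of_forall_mulVec_mem (hA : A.IsHermitian)
    (Φ : Matrix n n 𝕜 →ₗ[𝕜] Matrix n n 𝕜) {S : Submodule 𝕜 (n → 𝕜)}
    (hS : ∀ v, A *ᵥ v ∈ S)
    (hΦ : ∀ ψ ∈ S, star ψ ⬝ᵥ ψ = 1 → Φ (vecMulVec ψ (star ψ)) = vecMulVec ψ (star ψ)) :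
    Φ A = A := by
  classical
  rw [hA.eq_sum_eigenvalues_smul_vecMulVec, map_sum]
  refine Finset.sum_congr rfl fun k _ => ?_
  rw [map_smul]
  by_cases hk : (hA.eigenvalues k : 𝕜) = 0
  · simp [hk]
  have hmem : ⇑(hA.eigenvectorBasis k) ∈ S := by
    rw [← S.smul_mem_iff hk, ← RCLike.real_smul_eq_coe_smul, ← hA.mulVec_eigenvectorBasis]
    exact hS _
  rw [hΦ _ hmem (hA.star_eigenvectorBasis_dotProduct_self k)]

end Matrix

theorem stmt_12_general {N : ℕ} {ι : Type} [Fintype ι]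
    (E : ι → Matrix (Fin N) (Fin N) ℂ)
    (S : Submodule ℂ (Fin N → ℂ))
    (hfix : ∀ ψ : Fin N → ℂ, ψ ∈ S → star ψ ⬝ᵥ ψ = 1 →
      ∑ m, E m * vecMulVec ψ (star ψ) * (E m)ᴴ = vecMulVec ψ (star ψ))
    (Λ : Matrix (Fin N) (Fin N) ℂ) (hΛ : Λ.PosSemidef)
    (hsupp : ∀ v : Fin N → ℂ, Λ *ᵥ v ∈ S) :
    ∑ m, E m * Λ * (E m)ᴴ = Λ :=
  hΛ.isHermitian.linearMap_apply_eq_self_of_forall_mulVec_mem (krausMap E) hsupp hfix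

/-- Theorem 1 (channel form): a trace-nonincreasing quantum operation that fixes every
pure state of a subspace S fixes every positive semidefinite matrix supported in S. -/
theorem stmt_12 {N : ℕ} {ι : Type} [Fintype ι]
    (E : ι → Matrix (Fin N) (Fin N) ℂ)
    (hE : (1 - ∑ m, (E m)ᴴ * E m).PosSemidef)
    (S : Submodule ℂ (Fin N → ℂ))
    (hfix : ∀ ψ : Fin N → ℂ, ψ ∈ S → star ψ ⬝ᵥ ψ = 1 →
      ∑ m, E m * vecMulVec ψ (star ψ) * (E m)ᴴ = vecMulVec ψ (star ψ))
    (Λ : Matrix (Fin N) (Fin N) ℂ) (hΛ : Λ.PosSemidef)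
    (hsupp : ∀ v : Fin N → ℂ, Λ *ᵥ v ∈ S) :
    ∑ m, E m * Λ * (E m)ᴴ = Λ :=
  stmt_12_general E S hfix Λ hΛ hsupp
end

section
/- Let Ê(ρ) = Σ_m E_m ρ E_m† with Σ_m E_m† E_m ≤ I be a quantum operation on ℂ^N, and let ψ be a unit vector with Ê(|ψ⟩⟨ψ|) = |ψ⟩⟨ψ|. Then each Kraus operator satisfies E_m ψ = c_m ψ for some scalar c_m with Σ_m |c_m|² = 1. -/
/-!
Write `v m = E m *ᵥ ψ`. The fixed-point equation says `∑ m, v m (v m)ᴴ = ψ ψᴴ`, so evaluating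
the quadratic form of both sides at any `x` gives `∑ m, |⟪x, v m⟫|² = |⟪x, ψ⟫|²`. Hence every
`x ⊥ ψ` is orthogonal to all `v m`; applied to `x = v m - ⟪ψ, v m⟫ ψ` this forces
`v m = ⟪ψ, v m⟫ ψ`, and `x = ψ` gives `∑ m, |⟪ψ, v m⟫|² = 1`.
-/

open Matrix ComplexOrder

namespace Matrix

variable {R ι n : Type*} [Fintype ι] [Fintype n]

theorem mul_vecMulVec_star_mul_conjTranspose [CommSemiring R] [StarRing R]
    (M : Matrix n n R) (x y : n → R) :
    M * vecMulVec x (star y) * Mᴴ = vecMulVec (M *ᵥ x) (star (M *ᵥ y)) := by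
  rw [mul_vecMulVec, vecMulVec_mul, star_mulVec]

theorem star_dotProduct_vecMulVec_star_mulVec [CommSemiring R] [StarRing R] (x a : n → R) :
    star x ⬝ᵥ vecMulVec a (star a) *ᵥ x = (star x ⬝ᵥ a) * star (star x ⬝ᵥ a) := by
  rw [vecMulVec_mulVec, op_smul_eq_smul, dotProduct_smul, smul_eq_mul, star_dotProduct a x,
    mul_comm]

section SumVecMulVec

variable {v : ι → n → R} {ψ : n → R}

theorem sum_mul_star_dotProduct_eq [CommSemiring R] [StarRing R]
    (h : ∑ m, vecMulVec (v m) (star (v m)) = vecMulVec ψ (star ψ)) (x : n → R) :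
    ∑ m, (star x ⬝ᵥ v m) * star (star x ⬝ᵥ v m) = (star x ⬝ᵥ ψ) * star (star x ⬝ᵥ ψ) := by
  simp_rw [← star_dotProduct_vecMulVec_star_mulVec, ← dotProduct_sum, ← sum_mulVec, h]

theorem sum_mul_star_eq_one_of_sum_vecMulVec_eq [CommSemiring R] [StarRing R]
    (h : ∑ m, vecMulVec (v m) (star (v m)) = vecMulVec ψ (star ψ)) (hψ : star ψ ⬝ᵥ ψ = 1) :
    ∑ m, (star ψ ⬝ᵥ v m) * star (star ψ ⬝ᵥ v m) = 1 := by
  rw [sum_mul_star_dotProduct_eq h, hψ, star_one, mul_one]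

variable [CommRing R] [StarRing R] [PartialOrder R] [StarOrderedRing R] [NoZeroDivisors R]

theorem dotProduct_eq_zero_of_sum_vecMulVec_eq
    (h : ∑ m, vecMulVec (v m) (star (v m)) = vecMulVec ψ (star ψ)) {x : n → R}
    (hx : star x ⬝ᵥ ψ = 0) (m : ι) : star x ⬝ᵥ v m = 0 := by
  have hsum := sum_mul_star_dotProduct_eq h x
  rw [hx, zero_mul, Fintype.sum_eq_zero_iff_of_nonneg fun _ => mul_star_self_nonneg _] at hsum
  simpa using congrFun hsum m

theorem eq_smul_of_sum_vecMulVec_eq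
    (h : ∑ m, vecMulVec (v m) (star (v m)) = vecMulVec ψ (star ψ)) (hψ : star ψ ⬝ᵥ ψ = 1)
    (m : ι) : v m = (star ψ ⬝ᵥ v m) • ψ := by
  set x := v m - (star ψ ⬝ᵥ v m) • ψ
  have hψx : star ψ ⬝ᵥ x = 0 := by
    rw [dotProduct_sub, dotProduct_smul, hψ, smul_eq_mul, mul_one, sub_self]
  have hxψ : star x ⬝ᵥ ψ = 0 := by
    rw [star_dotProduct, hψx, star_zero]
  have hxv := dotProduct_eq_zero_of_sum_vecMulVec_eq h hxψ m
  have hxx : star x ⬝ᵥ x = 0 := by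
    rw [dotProduct_sub, dotProduct_smul, hxv, hxψ, smul_zero, sub_zero]
  exact sub_eq_zero.mp (dotProduct_star_self_eq_zero.mp hxx)

end SumVecMulVec

end Matrix

theorem stmt_13_general {N : ℕ} {ι : Type} [Fintype ι]
    (E : ι → Matrix (Fin N) (Fin N) ℂ)
    (ψ : Fin N → ℂ) (hψ : star ψ ⬝ᵥ ψ = 1)
    (hfix : ∑ m, E m * vecMulVec ψ (star ψ) * (E m)ᴴ = vecMulVec ψ (star ψ)) :
    ∃ c : ι → ℂ, (∀ m, E m *ᵥ ψ = c m • ψ) ∧ ∑ m, ‖c m‖ ^ 2 = 1 := by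
  simp_rw [mul_vecMulVec_star_mul_conjTranspose] at hfix
  refine ⟨fun m => star ψ ⬝ᵥ E m *ᵥ ψ, eq_smul_of_sum_vecMulVec_eq hfix hψ, ?_⟩
  have hsum := sum_mul_star_eq_one_of_sum_vecMulVec_eq hfix hψ
  simp_rw [Complex.star_def, Complex.mul_conj'] at hsum
  exact_mod_cast hsum

/-- Kraus-operator fixed-point lemma: if a trace-nonincreasing CP map fixes a pure
state, each Kraus operator has that state as an eigenvector, with eigenvalues whose
squared moduli sum to 1. -/
theorem stmt_13 {N : ℕ} {ι : Type} [Fintype ι]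
    (E : ι → Matrix (Fin N) (Fin N) ℂ)
    (hE : (1 - ∑ m, (E m)ᴴ * E m).PosSemidef)
    (ψ : Fin N → ℂ) (hψ : star ψ ⬝ᵥ ψ = 1)
    (hfix : ∑ m, E m * vecMulVec ψ (star ψ) * (E m)ᴴ = vecMulVec ψ (star ψ)) :
    ∃ c : ι → ℂ, (∀ m, E m *ᵥ ψ = c m • ψ) ∧ ∑ m, ‖c m‖ ^ 2 = 1 :=
  stmt_13_general E ψ hψ hfix
end
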